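/- As α → ∞, the entropy of SN(μ, σ², α) converges to H_{N(μ,σ²)} − ln 2, the entropy of a half-normal distribution with parameter σ² (shifted by μ). -/

import Mathlib

open MeasureTheory Real Filter

open Set Topology

noncomputable def stdphi (x : ℝ) : ℝ := (Real.sqrt (2 * Real.pi))⁻¹ * Real.exp (-(x ^ 2) / 2)

noncomputable def stdPhi (x : ℝ) : ℝ := ∫ t in Set.Iic x, stdphi t


lemma stdphi_pos (x : ℝ) : 0 < stdphi x := by
  unfold stdphi
  positivity

lemma stdphi_le (x : ℝ) : stdphi x ≤ stdphi 0 := by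
  unfold stdphi
  have : Real.exp (-(x ^ 2) / 2) ≤ Real.exp (-(0 ^ 2) / 2) := by
    apply Real.exp_le_exp.mpr; nlinarith [sq_nonneg x]
  exact mul_le_mul_of_nonneg_left this (by positivity)

lemma stdphi_eq (x : ℝ) : stdphi x = (Real.sqrt (2 * Real.pi))⁻¹ * Real.exp (-(1/2) * x ^ 2) := by
  unfold stdphi; ring_nf

lemma integrable_stdphi : Integrable stdphi := by
  have := (integrable_exp_neg_mul_sq (by norm_num : (0:ℝ) < 1/2)).const_mul (Real.sqrt (2 * Real.pi))⁻¹
  apply this.congr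
  filter_upwards with x
  rw [stdphi_eq]

lemma integral_stdphi : ∫ x, stdphi x = 1 := by
  have h := integral_gaussian (1/2 : ℝ)
  simp_rw [stdphi_eq]
  rw [MeasureTheory.integral_const_mul, h]
  rw [show Real.pi / (1/2:ℝ) = 2 * Real.pi by ring]
  exact inv_mul_cancel₀ (by positivity)

lemma continuous_stdphi : Continuous stdphi := by
  unfold stdphi; fun_prop

lemma stdPhi_nonneg (x : ℝ) : 0 ≤ stdPhi x :=
  setIntegral_nonneg measurableSet_Iic (fun t _ => (stdphi_pos t).le)

lemma stdPhi_le_one (x : ℝ) : stdPhi x ≤ 1 := by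
  rw [← integral_stdphi]
  exact setIntegral_le_integral integrable_stdphi
    (Filter.Eventually.of_forall fun t => (stdphi_pos t).le)

lemma stdPhi_mono : Monotone stdPhi := fun a b hab =>
  setIntegral_mono_set integrable_stdphi.integrableOn
    (Filter.Eventually.of_forall fun t => (stdphi_pos t).le)
    (HasSubset.Subset.eventuallyLE (Iic_subset_Iic.mpr hab))

lemma measurable_stdPhi : Measurable stdPhi := stdPhi_mono.measurable

lemma tendsto_stdPhi_atTop : Tendsto stdPhi atTop (𝓝 1) := by
  rw [← integral_stdphi]
  have : Tendsto (fun x : ℝ => ∫ t, (Iic x).indicator stdphi t) atTop (𝓝 (∫ t, stdphi t)) := by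
    apply tendsto_integral_filter_of_dominated_convergence stdphi
    · exact Filter.Eventually.of_forall fun x =>
        (continuous_stdphi.measurable.indicator measurableSet_Iic).aestronglyMeasurable
    · refine Filter.Eventually.of_forall fun x => Filter.Eventually.of_forall fun t => ?_
      rw [Real.norm_eq_abs, abs_of_nonneg (Set.indicator_nonneg (fun s _ => (stdphi_pos s).le) t)]
      exact Set.indicator_le_self' (fun s _ => (stdphi_pos s).le) t
    · exact integrable_stdphi
    · refine Filter.Eventually.of_forall fun t => ?_
      apply tendsto_const_nhds.congr'
      filter_upwards [eventually_ge_atTop t] with x hx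
      simp [Set.indicator_of_mem (Set.mem_Iic.mpr hx)]
  apply this.congr
  intro x
  rw [integral_indicator measurableSet_Iic]
  rfl

lemma tendsto_stdPhi_atBot : Tendsto stdPhi atBot (𝓝 0) := by
  have : Tendsto (fun x : ℝ => ∫ t, (Iic x).indicator stdphi t) atBot (𝓝 (∫ _ : ℝ, (0:ℝ))) := by
    apply tendsto_integral_filter_of_dominated_convergence stdphi
    · exact Filter.Eventually.of_forall fun x =>
        (continuous_stdphi.measurable.indicator measurableSet_Iic).aestronglyMeasurable
    · refine Filter.Eventually.of_forall fun x => Filter.Eventually.of_forall fun t => ?_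
      rw [Real.norm_eq_abs, abs_of_nonneg (Set.indicator_nonneg (fun s _ => (stdphi_pos s).le) t)]
      exact Set.indicator_le_self' (fun s _ => (stdphi_pos s).le) t
    · exact integrable_stdphi
    · refine Filter.Eventually.of_forall fun t => ?_
      apply tendsto_const_nhds.congr'
      filter_upwards [eventually_lt_atBot t] with x hx
      simp [Set.indicator_of_notMem (by simpa using hx.not_ge : t ∉ Iic x)]
  simp only [integral_zero] at this
  apply this.congr
  intro x
  rw [integral_indicator measurableSet_Iic]
  rfl

lemma abs_mul_log_le {t M : ℝ} (h0 : 0 ≤ t) (hM : t ≤ M) :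
    |t * Real.log t| ≤ 2 * Real.sqrt M + M * max (Real.log M) 0 := by
  have hM0 : 0 ≤ M := h0.trans hM
  rcases h0.eq_or_lt with rfl | ht
  · simp only [Real.log_zero, mul_zero, zero_mul, abs_zero]
    positivity
  rw [abs_le]
  constructor
  · -- lower bound : -(2√M + ...) ≤ t log t i.e. -(t log t) ≤ ...
    rw [neg_le]
    rcases le_or_gt 0 (Real.log t) with hl | hl
    · have : -(t * Real.log t) ≤ 0 := by nlinarith
      have h2 : (0:ℝ) ≤ 2 * Real.sqrt M + M * max (Real.log M) 0 := by positivity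
      linarith
    · have hst : 0 < Real.sqrt t := Real.sqrt_pos.mpr ht
      have hlog : -Real.log t = 2 * Real.log (Real.sqrt t)⁻¹ := by
        rw [Real.log_inv, Real.log_sqrt h0]; ring
      have hle : Real.log (Real.sqrt t)⁻¹ ≤ (Real.sqrt t)⁻¹ := by
        have := Real.log_le_sub_one_of_pos (inv_pos.mpr hst)
        linarith
      have hts : Real.sqrt t * Real.sqrt t = t := Real.mul_self_sqrt h0
      have : -(t * Real.log t) ≤ 2 * Real.sqrt t := by
        have h1 : -(t * Real.log t) = t * (2 * Real.log (Real.sqrt t)⁻¹) := by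
          rw [← hlog]; ring
        rw [h1]
        have h2 : t * (2 * Real.log (Real.sqrt t)⁻¹) ≤ t * (2 * (Real.sqrt t)⁻¹) := by
          apply mul_le_mul_of_nonneg_left (by linarith) h0
        have h3 : t * (2 * (Real.sqrt t)⁻¹) = 2 * Real.sqrt t := by
          field_simp
          nlinarith
        linarith
      have hsM : Real.sqrt t ≤ Real.sqrt M := Real.sqrt_le_sqrt hM
      have h4 : (0:ℝ) ≤ M * max (Real.log M) 0 := by positivity
      linarith
  · -- upper bound
    have h1 : Real.log t ≤ max (Real.log M) 0 :=
      le_max_of_le_left (Real.log_le_log ht hM)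
    rcases le_or_gt (Real.log t) 0 with hl | hl
    · have : t * Real.log t ≤ 0 := by nlinarith
      have h2 : (0:ℝ) ≤ 2 * Real.sqrt M + M * max (Real.log M) 0 := by positivity
      linarith
    · have : t * Real.log t ≤ M * max (Real.log M) 0 := by
        have := mul_le_mul hM h1 hl.le hM0
        linarith
      have h3 : (0:ℝ) ≤ 2 * Real.sqrt M := by positivity
      linarith

lemma sqrt_stdphi (x : ℝ) :
    Real.sqrt (stdphi x) = Real.sqrt ((Real.sqrt (2 * Real.pi))⁻¹) * Real.exp (-(1/4) * x ^ 2) := by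
  unfold stdphi
  rw [Real.sqrt_mul (by positivity), ← Real.exp_half]
  congr 1
  ring_nf

lemma integrable_sqrt_stdphi (c : ℝ) : Integrable (fun x => Real.sqrt (c * stdphi x)) := by
  rcases le_or_gt c 0 with hc | hc
  · have : ∀ x, Real.sqrt (c * stdphi x) = 0 := by
      intro x
      apply Real.sqrt_eq_zero'.mpr
      have hp : 0 < stdphi x := by unfold stdphi; positivity
      exact mul_nonpos_of_nonpos_of_nonneg hc hp.le
    simp only [this]
    exact integrable_zero _ _ _
  · have h : ∀ x, Real.sqrt (c * stdphi x)
        = (Real.sqrt c * Real.sqrt ((Real.sqrt (2 * Real.pi))⁻¹)) * Real.exp (-(1/4) * x ^ 2) := by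
      intro x
      rw [Real.sqrt_mul hc.le, sqrt_stdphi]
      ring
    simp only [h]
    exact (integrable_exp_neg_mul_sq (by norm_num : (0:ℝ) < 1/4)).const_mul _

lemma tendsto_x_exp : Tendsto (fun x : ℝ => -x * Real.exp (-(x^2)/2)) atTop (𝓝 0) := by
  have h := Real.tendsto_pow_mul_exp_neg_atTop_nhds_zero 1
  have h2 : Tendsto (fun x : ℝ => x^2/2) atTop atTop := by
    apply Filter.Tendsto.atTop_div_const two_pos
    exact tendsto_pow_atTop (by norm_num)
  have h3 : Tendsto (fun x : ℝ => (x^2/2) * Real.exp (-(x^2/2))) atTop (𝓝 0) := by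
    have := h.comp h2
    simpa [Function.comp_def] using this
  -- squeeze: for x ≥ 2, 0 ≤ x exp(-(x^2)/2) ≤ (x^2/2) exp(-(x^2)/2)
  have goal : Tendsto (fun x : ℝ => x * Real.exp (-(x^2)/2)) atTop (𝓝 0) := by
    apply squeeze_zero' (by filter_upwards [eventually_ge_atTop (0:ℝ)] with x hx using by positivity) ?_ h3
    · filter_upwards [eventually_ge_atTop (2:ℝ)] with x hx
      have : x ≤ x^2/2 := by nlinarith
      have he : (0:ℝ) < Real.exp (-(x^2)/2) := Real.exp_pos _
      calc x * Real.exp (-(x^2)/2) ≤ (x^2/2) * Real.exp (-(x^2)/2) := by nlinarith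
      _ = (x^2/2) * Real.exp (-(x^2/2)) := by ring_nf
  have := goal.neg
  simp only [neg_zero] at this
  apply this.congr
  intro x
  ring

lemma integrableOn_sq_exp : IntegrableOn (fun x : ℝ => x^2 * Real.exp (-(x^2)/2)) (Ioi 0) := by
  have h := integrableOn_rpow_mul_exp_neg_mul_sq (by norm_num : (0:ℝ) < 1/2) (by norm_num : (-1:ℝ) < 2)
  apply h.congr_fun ?_ measurableSet_Ioi
  intro x hx
  have hx0 : (0:ℝ) ≤ x := (le_of_lt hx)
  have h2 : (x : ℝ) ^ (2:ℝ) = x ^ 2 := by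
    rw [show (2:ℝ) = ((2:ℕ):ℝ) by norm_num, Real.rpow_natCast]
  simp only [h2]
  ring_nf

lemma integrableOn_exp_Ioi : IntegrableOn (fun x : ℝ => Real.exp (-(x^2)/2)) (Ioi 0) := by
  have := (integrable_exp_neg_mul_sq (by norm_num : (0:ℝ) < 1/2)).integrableOn (s := Ioi 0)
  apply this.congr_fun ?_ measurableSet_Ioi
  intro x _
  ring_nf

lemma integral_exp_Ioi : ∫ x in Ioi (0:ℝ), Real.exp (-(x^2)/2) = Real.sqrt (2*Real.pi) / 2 := by
  have h := integral_gaussian_Ioi (1/2 : ℝ)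
  rw [show Real.pi / (1/2:ℝ) = 2 * Real.pi by ring] at h
  rw [← h]
  apply setIntegral_congr_fun measurableSet_Ioi
  intro x _
  ring_nf

lemma integral_sq_exp_Ioi :
    ∫ x in Ioi (0:ℝ), x^2 * Real.exp (-(x^2)/2) = Real.sqrt (2*Real.pi) / 2 := by
  have hderiv : ∀ x ∈ Ioi (0:ℝ), HasDerivAt (fun x : ℝ => -x * Real.exp (-(x^2)/2))
      (x^2 * Real.exp (-(x^2)/2) - Real.exp (-(x^2)/2)) x := by
    intro x _
    have h1 : HasDerivAt (fun x : ℝ => -(x^2)/2) (-x) x := by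
      have := ((hasDerivAt_pow 2 x).neg).div_const 2
      simpa using this.congr_deriv (by push_cast; ring)
    have h2 : HasDerivAt (fun x : ℝ => Real.exp (-(x^2)/2)) (Real.exp (-(x^2)/2) * (-x)) x :=
      (Real.hasDerivAt_exp _).comp x h1
    have h3 := (hasDerivAt_neg x).mul h2
    apply h3.congr_deriv
    ring
  have hint : IntegrableOn (fun x : ℝ => x^2 * Real.exp (-(x^2)/2) - Real.exp (-(x^2)/2)) (Ioi 0) :=
    integrableOn_sq_exp.sub integrableOn_exp_Ioi
  have hcont : ContinuousWithinAt (fun x : ℝ => -x * Real.exp (-(x^2)/2)) (Ici 0) 0 := by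
    apply Continuous.continuousWithinAt
    fun_prop
  have := integral_Ioi_of_hasDerivAt_of_tendsto hcont hderiv hint tendsto_x_exp
  simp only [neg_zero, zero_mul, sub_zero] at this
  have hsplit := integral_sub integrableOn_sq_exp integrableOn_exp_Ioi
  rw [hsplit] at this
  rw [integral_exp_Ioi] at this
  linarith

lemma integral_limit (c : ℝ) (hc : 0 < c) :
    ∫ x in Ioi (0:ℝ), (c * stdphi x) * Real.log (c * stdphi x)
      = (c/2) * (Real.log (c * (Real.sqrt (2*Real.pi))⁻¹) - 1/2) := by
  set A : ℝ := (Real.sqrt (2*Real.pi))⁻¹ with hA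
  have hA0 : 0 < A := by positivity
  set K : ℝ := Real.log (c * A) with hK
  have hrw : ∀ x ∈ Ioi (0:ℝ), (c * stdphi x) * Real.log (c * stdphi x)
      = (c * A * K) * Real.exp (-(x^2)/2) - (c * A / 2) * (x^2 * Real.exp (-(x^2)/2)) := by
    intro x _
    have hphi : stdphi x = A * Real.exp (-(x^2)/2) := rfl
    have hlog : Real.log (c * stdphi x) = K + (-(x^2)/2) := by
      rw [hphi, show c * (A * Real.exp (-(x^2)/2)) = (c * A) * Real.exp (-(x^2)/2) by ring,
        Real.log_mul (by positivity) (Real.exp_ne_zero _), Real.log_exp]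
    rw [hphi] at hlog ⊢
    rw [hlog]
    ring
  rw [setIntegral_congr_fun measurableSet_Ioi hrw]
  rw [integral_sub ((integrableOn_exp_Ioi.const_mul _)) ((integrableOn_sq_exp.const_mul _)),
    MeasureTheory.integral_const_mul, MeasureTheory.integral_const_mul, integral_exp_Ioi, integral_sq_exp_Ioi]
  have hS : A * (Real.sqrt (2*Real.pi) / 2) = 1/2 := by
    rw [hA]
    field_simp
  linear_combination (c * K - c/2) * hS

lemma tendsto_main (c : ℝ) (hc : 0 < c) :
    Tendsto (fun α : ℝ =>
        ∫ x, (c * stdphi x * stdPhi (α * x)) * Real.log (c * stdphi x * stdPhi (α * x)))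
      atTop
      (𝓝 (∫ x, (Ioi (0:ℝ)).indicator
        (fun x => (c * stdphi x) * Real.log (c * stdphi x)) x)) := by
  have hFmeas : ∀ α : ℝ, Measurable (fun x => c * stdphi x * stdPhi (α * x)) := fun α =>
    ((continuous_stdphi.measurable.const_mul c).mul
      (measurable_stdPhi.comp (measurable_id.const_mul α)))
  apply tendsto_integral_filter_of_dominated_convergence
    (fun x => 2 * Real.sqrt (c * stdphi x) + (c * stdphi x) * max (Real.log (c * stdphi 0)) 0)
  · refine Filter.Eventually.of_forall fun α => ?_
    exact ((Real.continuous_mul_log.measurable.comp (hFmeas α))).aestronglyMeasurable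
  · refine Filter.Eventually.of_forall fun α => Filter.Eventually.of_forall fun x => ?_
    have hp := stdphi_pos x
    set F := c * stdphi x * stdPhi (α * x) with hF
    have h0 : 0 ≤ F := mul_nonneg (mul_nonneg hc.le hp.le) (stdPhi_nonneg _)
    have hM : F ≤ c * stdphi x := by
      rw [hF]
      exact mul_le_of_le_one_right (mul_nonneg hc.le hp.le) (stdPhi_le_one _)
    have hb := abs_mul_log_le h0 hM
    rw [Real.norm_eq_abs]
    refine hb.trans ?_
    have hmax : max (Real.log (c * stdphi x)) 0 ≤ max (Real.log (c * stdphi 0)) 0 :=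
      max_le_max (Real.log_le_log (mul_pos hc hp)
        (mul_le_mul_of_nonneg_left (stdphi_le x) hc.le)) le_rfl
    have hcx : 0 ≤ c * stdphi x := mul_nonneg hc.le hp.le
    have := mul_le_mul_of_nonneg_left hmax hcx
    linarith
  · exact ((integrable_sqrt_stdphi c).const_mul 2).add
      ((integrable_stdphi.const_mul c).mul_const _)
  · have h0 : ∀ᵐ x : ℝ, x ≠ 0 := by
      have hset : {a : ℝ | ¬ a ≠ 0} = {0} := by ext a; simp
      rw [ae_iff, hset]
      exact measure_singleton 0
    filter_upwards [h0] with x hx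
    rcases hx.lt_or_gt with hneg | hpos
    · have hmul : Tendsto (fun α : ℝ => α * x) atTop atBot :=
        Tendsto.atTop_mul_const_of_neg hneg tendsto_id
      have hF : Tendsto (fun α : ℝ => c * stdphi x * stdPhi (α * x)) atTop
          (𝓝 (c * stdphi x * 0)) :=
        tendsto_const_nhds.mul (tendsto_stdPhi_atBot.comp hmul)
      have := (Real.continuous_mul_log.tendsto _).comp hF
      simp only [Function.comp, mul_zero, zero_mul, Real.log_zero] at this
      rw [Set.indicator_of_notMem (by simpa using hneg.not_gt : x ∉ Ioi (0:ℝ))]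
      exact this
    · have hmul : Tendsto (fun α : ℝ => α * x) atTop atTop :=
        Tendsto.atTop_mul_const hpos tendsto_id
      have hF : Tendsto (fun α : ℝ => c * stdphi x * stdPhi (α * x)) atTop
          (𝓝 (c * stdphi x * 1)) :=
        tendsto_const_nhds.mul (tendsto_stdPhi_atTop.comp hmul)
      have := (Real.continuous_mul_log.tendsto _).comp hF
      simp only [Function.comp, mul_one] at this
      rw [Set.indicator_of_mem (Set.mem_Ioi.mpr hpos)]
      exact this

/-- As `α → ∞`, the entropy of `SN(μ, σ², α)` converges to `H_{N(μ,σ²)} − ln 2`, the entropy of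
a half-normal distribution with parameter `σ²` (shifted by `μ`). -/
theorem entropy_skew_normal_tendsto_atTop (μ σ : ℝ) (hσ : 0 < σ) :
    Tendsto (fun α : ℝ =>
        -∫ z, ((2 / σ) * stdphi ((z - μ) / σ) * stdPhi (α * ((z - μ) / σ))) *
          Real.log ((2 / σ) * stdphi ((z - μ) / σ) * stdPhi (α * ((z - μ) / σ))))
      atTop
      (nhds (((1 / 2) * Real.log (σ ^ 2) + (1 / 2) * (1 + Real.log (2 * π))) - Real.log 2)) := by
  set c : ℝ := 2 / σ with hcdef
  have hc : 0 < c := by positivity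
  have key : ∀ α : ℝ,
      (∫ z, ((2 / σ) * stdphi ((z - μ) / σ) * stdPhi (α * ((z - μ) / σ))) *
          Real.log ((2 / σ) * stdphi ((z - μ) / σ) * stdPhi (α * ((z - μ) / σ))))
        = σ * ∫ x, (c * stdphi x * stdPhi (α * x)) * Real.log (c * stdphi x * stdPhi (α * x)) := by
    intro α
    set W : ℝ → ℝ := fun x => (c * stdphi x * stdPhi (α * x)) *
      Real.log (c * stdphi x * stdPhi (α * x)) with hW
    calc (∫ z, ((2 / σ) * stdphi ((z - μ) / σ) * stdPhi (α * ((z - μ) / σ))) *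
          Real.log ((2 / σ) * stdphi ((z - μ) / σ) * stdPhi (α * ((z - μ) / σ))))
        = ∫ z, (fun w => W (w / σ)) (z - μ) := by rfl
      _ = ∫ w, W (w / σ) := integral_sub_right_eq_self (fun w => W (w / σ)) μ
      _ = |σ| • ∫ x, W x := MeasureTheory.Measure.integral_comp_div W σ
      _ = σ * ∫ x, W x := by rw [abs_of_pos hσ, smul_eq_mul]
  have hmain := ((tendsto_main c hc).const_mul σ).neg
  rw [MeasureTheory.integral_indicator measurableSet_Ioi, integral_limit c hc] at hmain
  have hval : -(σ * ((c/2) * (Real.log (c * (Real.sqrt (2*Real.pi))⁻¹) - 1/2)))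
      = ((1 / 2) * Real.log (σ ^ 2) + (1 / 2) * (1 + Real.log (2 * π))) - Real.log 2 := by
    rw [Real.log_mul (ne_of_gt hc) (by positivity), hcdef,
      Real.log_div two_ne_zero hσ.ne', Real.log_inv, Real.log_sqrt (by positivity),
      Real.log_pow]
    field_simp
    ring
  rw [← hval]
  apply hmain.congr
  intro α
  rw [key α]
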